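/- Let h be a probability density on ℝ, m ≥ 1 an integer, and β ∈ L²(ℝ) with ∫ h^{1/2} β = 0. Define the operator T on functions of (z_1,…,z_m) by (Tβ)(z) = m h(z)^{1/2} ∫_{ℝ^{m−1}} ∏_{l=2}^m h(z_l) (h(z)^{−1/2} β(z) + ∑_{k=2}^m h(z_k)^{−1/2} β(z_k)) dz_2⋯dz_m. Then (Tβ)(z) = m β(z) for almost every z. -/

import Mathlib

open MeasureTheory

/-! By Fubini, each summand of the integrand integrates to a product of one-dimensional
integrals: the first gives `β z * (∫ h) ^ (m - 1) = β z`, and each cross term contains the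
factor `∫ √h β = 0`. So the identity even holds at every `z`. -/

section ProductIntegrals

variable {ι 𝕜 E : Type*} [Fintype ι] [DecidableEq ι] [RCLike 𝕜]

lemma mul_prod_erase_eq_prod_update (f g : E → 𝕜) (k : ι) (y : ι → E) :
    g (y k) * ∏ l ∈ Finset.univ.erase k, f (y l)
      = ∏ l, Function.update (fun _ ↦ f) k g l (y l) := by
  rw [← Finset.mul_prod_erase _ _ (Finset.mem_univ k), Function.update_self]
  congr 1
  refine Finset.prod_congr rfl fun l hl ↦ ?_
  rw [Function.update_of_ne (Finset.ne_of_mem_erase hl)]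

variable [MeasurableSpace E] {μ : Measure E} [SigmaFinite μ]

lemma integrable_mul_prod_erase {f g : E → 𝕜} (hf : Integrable f μ) (hg : Integrable g μ)
    (k : ι) :
    Integrable (fun y : ι → E ↦ g (y k) * ∏ l ∈ Finset.univ.erase k, f (y l))
      (Measure.pi fun _ ↦ μ) := by
  simp_rw [mul_prod_erase_eq_prod_update]
  refine Integrable.fintype_prod fun l ↦ ?_
  rcases eq_or_ne l k with rfl | hlk
  · simpa using hg
  · simpa [hlk] using hf

lemma integral_mul_prod_erase (f g : E → 𝕜) (k : ι) :
    ∫ y : ι → E, g (y k) * ∏ l ∈ Finset.univ.erase k, f (y l) ∂(Measure.pi fun _ ↦ μ)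
      = (∫ x, g x ∂μ) * (∫ x, f x ∂μ) ^ (Fintype.card ι - 1) := by
  simp_rw [mul_prod_erase_eq_prod_update, integral_fintype_prod_eq_prod,
    ← Finset.mul_prod_erase _ _ (Finset.mem_univ k), Function.update_self]
  rw [Finset.prod_congr rfl fun l hl ↦ by rw [Function.update_of_ne (Finset.ne_of_mem_erase hl)],
    Finset.prod_const, Finset.card_erase_of_mem (Finset.mem_univ k), Finset.card_univ]

end ProductIntegrals

lemma integrable_sqrt_mul_of_memLp_two {α : Type*} [MeasurableSpace α] {μ : Measure α}
    {f g : α → ℝ} (hf : Integrable f μ) (hf_nonneg : ∀ x, 0 ≤ f x) (hg : MemLp g 2 μ) :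
    Integrable (fun x ↦ Real.sqrt (f x) * g x) μ := by
  have hsqrt : MemLp (fun x ↦ Real.sqrt (f x)) 2 μ := by
    rw [memLp_two_iff_integrable_sq (Real.continuous_sqrt.comp_aestronglyMeasurable hf.1)]
    simpa only [Real.sq_sqrt (hf_nonneg _)] using hf
  exact hsqrt.integrable_mul hg

theorem BstarB_eq_m_id_general
    (h : ℝ → ℝ) (hh_nonneg : ∀ z, 0 ≤ h z)
    (hh_int : Integrable h) (hh_one : ∫ z, h z = 1)
    (β : ℝ → ℝ) (hβ_L2 : MemLp β 2 (volume : Measure ℝ))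
    (h_orth : ∫ z, Real.sqrt (h z) * β z = 0)
    (m : ℕ)
    (T : ℝ → ℝ)
    (hT : ∀ z, T z = (m : ℝ) *
        ∫ y : Fin (m - 1) → ℝ,
          (β z * ∏ l : Fin (m - 1), h (y l)
            + Real.sqrt (h z) *
              ∑ k : Fin (m - 1),
                Real.sqrt (h (y k)) * β (y k) * ∏ l ∈ Finset.univ.erase k, h (y l))) :
    ∀ᵐ z : ℝ, T z = (m : ℝ) * β z := by
  have hsqrt_β := integrable_sqrt_mul_of_memLp_two hh_int hh_nonneg hβ_L2
  have h_terms := fun k : Fin (m - 1) ↦ integrable_mul_prod_erase (μ := volume) hh_int hsqrt_β k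
  refine Filter.Eventually.of_forall fun z ↦ ?_
  rw [hT z, volume_pi, integral_add ((Integrable.fintype_prod fun _ ↦ hh_int).const_mul _)
      ((integrable_finsetSum _ fun k _ ↦ h_terms k).const_mul _),
    integral_const_mul, integral_const_mul, integral_fintype_prod_eq_pow,
    integral_finsetSum _ fun k _ ↦ h_terms k]
  simp only [integral_mul_prod_erase h (fun x ↦ Real.sqrt (h x) * β x), h_orth, hh_one]
  simp

theorem BstarB_eq_m_id
    (h : ℝ → ℝ) (hh_meas : Measurable h) (hh_nonneg : ∀ z, 0 ≤ h z)
    (hh_int : Integrable h) (hh_one : ∫ z, h z = 1)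
    (β : ℝ → ℝ) (hβ_meas : Measurable β) (hβ_L2 : MemLp β 2 (volume : Measure ℝ))
    (h_orth : ∫ z, Real.sqrt (h z) * β z = 0)
    (m : ℕ) (hm : 1 ≤ m)
    (T : ℝ → ℝ)
    (hT : ∀ z, T z = (m : ℝ) *
        ∫ y : Fin (m - 1) → ℝ,
          (β z * ∏ l : Fin (m - 1), h (y l)
            + Real.sqrt (h z) *
              ∑ k : Fin (m - 1),
                Real.sqrt (h (y k)) * β (y k) * ∏ l ∈ Finset.univ.erase k, h (y l))) :
    ∀ᵐ z : ℝ, T z = (m : ℝ) * β z :=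
  BstarB_eq_m_id_general h hh_nonneg hh_int hh_one β hβ_L2 h_orth m T hT
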